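/- Let 0 < δ ≤ 1, B ≥ 1, and let u satisfy δB/3 < min(u, n − u) where n ≥ 2δB/3, n ≤ B, and assume n ≥ 6, u ≤ n/2, and ν₁ ≤ u/12. Define α′ ∈ ℝⁿ⁻¹ by α′_t = √(t/(n(n−t)))·(n − u) for t ≤ u and α′_t = √((n−t)/(nt))·u for t > u, and let α̃′ be the subvector with indices from ν₁+1 to n−1−ν₁. Then ‖α̃′‖ ≥ u/(2√6). -/
import Mathlib


/-- Lemma S.2: the truncated CUSUM weight vector for a single change at `u`
retains Euclidean norm at least `u/(2√6)`. -/
theorem stmt_11 (B n u ν₁ : ℕ) (δ : ℝ) (hδ0 : 0 < δ) (hδ1 : δ ≤ 1) (hB : 1 ≤ B)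
    (hmin : δ * B / 3 < min (u : ℝ) ((n : ℝ) - u))
    (hn23 : 2 * δ * B / 3 ≤ (n : ℝ)) (hnB : n ≤ B) (hn6 : 6 ≤ n)
    (hu : (u : ℝ) ≤ (n : ℝ) / 2) (hν : (ν₁ : ℝ) ≤ (u : ℝ) / 12)
    (α' : ℕ → ℝ)
    (hα : ∀ t ∈ Finset.Icc 1 (n - 1),
      α' t = if t ≤ u then Real.sqrt ((t : ℝ) / ((n : ℝ) * ((n : ℝ) - t))) * ((n : ℝ) - u)
             else Real.sqrt (((n : ℝ) - t) / ((n : ℝ) * t)) * (u : ℝ)) :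
    (u : ℝ) / (2 * Real.sqrt 6) ≤
      Real.sqrt (∑ t ∈ Finset.Icc (ν₁ + 1) (n - 1 - ν₁), (α' t) ^ 2) := by
  -- basic numeric facts
  have hδB : 0 < δ * B / 3 := by positivity
  have huR : (0 : ℝ) < (u : ℝ) := lt_of_lt_of_le hδB ((lt_min_iff.mp hmin).1.le)
  have hu1 : 1 ≤ u := by exact_mod_cast Nat.one_le_iff_ne_zero.mpr (by
    intro h; rw [h] at huR; simp at huR)
  have h2u : 2 * u ≤ n := by
    have : (2 * u : ℝ) ≤ (n : ℝ) := by linarith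
    exact_mod_cast this
  have h12 : 12 * ν₁ ≤ u := by
    have : (12 * ν₁ : ℝ) ≤ (u : ℝ) := by linarith
    exact_mod_cast this
  have hν₁u : ν₁ ≤ u := by omega
  -- subset step
  have hsub : Finset.Icc (ν₁ + 1) u ⊆ Finset.Icc (ν₁ + 1) (n - 1 - ν₁) := by
    intro t ht
    simp only [Finset.mem_Icc] at *
    omega
  have h1 : ∑ t ∈ Finset.Icc (ν₁ + 1) u, (α' t) ^ 2 ≤
      ∑ t ∈ Finset.Icc (ν₁ + 1) (n - 1 - ν₁), (α' t) ^ 2 :=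
    Finset.sum_le_sum_of_subset_of_nonneg hsub (fun i _ _ => sq_nonneg _)
  -- per-term lower bound t/4
  have h2 : ∑ t ∈ Finset.Icc (ν₁ + 1) u, (t : ℝ) / 4 ≤
      ∑ t ∈ Finset.Icc (ν₁ + 1) u, (α' t) ^ 2 := by
    apply Finset.sum_le_sum
    intro t ht
    simp only [Finset.mem_Icc] at ht
    have htn : t ∈ Finset.Icc 1 (n - 1) := by
      simp only [Finset.mem_Icc]; omega
    rw [hα t htn, if_pos ht.2]
    have htnR : (t : ℝ) < (n : ℝ) := by
      have : t < n := by omega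
      exact_mod_cast this
    have hnR : (0 : ℝ) < (n : ℝ) := by positivity
    have hx : (0 : ℝ) ≤ (t : ℝ) / ((n : ℝ) * ((n : ℝ) - t)) := by
      apply div_nonneg (by positivity)
      nlinarith
    rw [mul_pow, Real.sq_sqrt hx]
    have hd : (0 : ℝ) < (n : ℝ) * ((n : ℝ) - t) := by nlinarith
    rw [div_mul_eq_mul_div, le_div_iff₀ hd]
    have htR : (0 : ℝ) ≤ (t : ℝ) := Nat.cast_nonneg t
    nlinarith [mul_nonneg htR (mul_nonneg (by linarith : (0:ℝ) ≤ (n:ℝ) - u - n/2)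
        (by linarith : (0:ℝ) ≤ (n:ℝ) - u + n/2)),
      mul_nonneg (mul_nonneg htR htR) hnR.le]
  -- Gauss sum
  have grange : ∀ m : ℕ, ∑ i ∈ Finset.range (m + 1), (i : ℝ) = ((m : ℝ) + 1) * m / 2 := by
    intro m
    have h := Finset.sum_range_id_mul_two (m + 1)
    simp only [Nat.add_sub_cancel] at h
    have h' : ((∑ i ∈ Finset.range (m + 1), i : ℕ) : ℝ) * 2 = (((m + 1) * m : ℕ) : ℝ) := by
      exact_mod_cast congrArg Nat.cast h
    rw [Nat.cast_sum] at h'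
    push_cast at h'
    linarith
  have hgR : ∑ t ∈ Finset.Icc (ν₁ + 1) u, (t : ℝ) =
      (((u : ℝ) + 1) * u - ((ν₁ : ℝ) + 1) * ν₁) / 2 := by
    have e : Finset.Icc (ν₁ + 1) u = Finset.range (u + 1) \ Finset.range (ν₁ + 1) := by
      ext x; simp [Finset.mem_Icc, Finset.mem_sdiff]; omega
    have hsub' : Finset.range (ν₁ + 1) ⊆ Finset.range (u + 1) := by
      intro x hx; simp at hx ⊢; omega
    rw [e, Finset.sum_sdiff_eq_sub hsub', grange, grange]
    ring
  have hsum : (u : ℝ) ^ 2 / 24 ≤ ∑ t ∈ Finset.Icc (ν₁ + 1) u, (t : ℝ) / 4 := by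
    rw [← Finset.sum_div, hgR]
    have hν0 : (0 : ℝ) ≤ (ν₁ : ℝ) := Nat.cast_nonneg _
    nlinarith [mul_le_mul hν hν hν0 (by positivity : (0:ℝ) ≤ (u:ℝ)/12)]
  -- conclude
  have hS : (u : ℝ) ^ 2 / 24 ≤ ∑ t ∈ Finset.Icc (ν₁ + 1) (n - 1 - ν₁), (α' t) ^ 2 := by
    linarith
  have h6 : (0 : ℝ) < Real.sqrt 6 := Real.sqrt_pos.mpr (by norm_num)
  have heq : (u : ℝ) / (2 * Real.sqrt 6) = Real.sqrt ((u : ℝ) ^ 2 / 24) := by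
    rw [Real.sqrt_div (sq_nonneg _), Real.sqrt_sq huR.le]
    congr 1
    rw [show (24 : ℝ) = 2 ^ 2 * 6 by norm_num, Real.sqrt_mul (by positivity),
      Real.sqrt_sq (by norm_num)]
  rw [heq]
  exact Real.sqrt_le_sqrt hS
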